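/- arXiv:2605.31214 — 6 statements merged into one kernel-verified Lean document; each statement's English description precedes it below -/
import Mathlib

section
/- Let u >= 3, and let h_{i,j} for i in [l], 0 <= j <= 3 be the columns of the block parity-check matrix H whose upper part consists of l disjoint all-ones local parity rows and whose lower part in block i is (0, v1^{(i)}, v2^{(i)}, v3^{(i)}) with v1^{(i)}, v2^{(i)}, v3^{(i)} in F_q^u. If for each i the vectors v1^{(i)}, v2^{(i)}, v3^{(i)} are linearly independent, and the 6l vectors in the union of P_i = {v1^{(i)}, v2^{(i)}, v3^{(i)}, v1^{(i)}-v2^{(i)}, v1^{(i)}-v3^{(i)}, v2^{(i)}-v3^{(i)}} are pairwise linearly independent, then any four columns of H are linearly independent; equivalently, the code with parity-check matrix H has minimum distance at least 5. -/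
open Finset

/-- The column `h_{i,j} = (e_i ; v_j^{(i)})` of the block parity-check matrix `H`. -/
def lrcCol (F : Type*) [Field F] {l u : ℕ} (v : Fin l → Fin 4 → (Fin u → F))
    (p : Fin l × Fin 4) : (Fin l → F) × (Fin u → F) :=
  (Pi.single p.1 (1 : F), v p.1 p.2)

lemma le_hammingNorm_of_subset {F : Type*} [DecidableEq F] [Zero F] {n : ℕ}
    {f : Fin n → F} (s : Finset (Fin n)) (hs : ∀ a ∈ s, f a ≠ 0) :
    s.card ≤ hammingNorm f := by
  apply Finset.card_le_card
  intro a ha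
  simp only [hammingNorm, mem_filter, mem_univ, true_and]
  exact hs a ha

lemma hammingNorm_prod_sum {F : Type*} [DecidableEq F] [Zero F] {l m : ℕ}
    (x : Fin l × Fin m → F) :
    hammingNorm x = ∑ i, hammingNorm (fun j => x (i, j)) := by
  classical
  simp only [hammingNorm]
  rw [Finset.card_eq_sum_card_fiberwise (f := Prod.fst) (t := Finset.univ) (fun p _ => mem_univ _)]
  refine Finset.sum_congr rfl fun i _ => ?_
  have : (filter (fun i_1 => x i_1 ≠ 0) univ).filter (fun p => p.1 = i)
      = (univ.filter (fun j => x (i, j) ≠ 0)).image (fun j => (i, j)) := by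
    ext ⟨a, b⟩
    simp only [mem_filter, mem_univ, true_and, mem_image]
    constructor
    · rintro ⟨h1, rfl⟩; exact ⟨b, h1, rfl⟩
    · rintro ⟨j, hj, he⟩
      cases he
      exact ⟨hj, rfl⟩
  rw [this, Finset.card_image_of_injective _ (fun a b h => by simpa using h)]

lemma block_lemma {F : Type*} [Field F] [DecidableEq F] {u : ℕ} (v1 v2 v3 : Fin u → F)
    (f : Fin 4 → F) (hsum : f 0 + f 1 + f 2 + f 3 = 0)
    (hn : hammingNorm f ≤ 2) (hne : ¬(f 1 = 0 ∧ f 2 = 0 ∧ f 3 = 0)) :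
    ∃ (m : Fin 6) (c : F), c ≠ 0 ∧
      f 1 • v1 + f 2 • v2 + f 3 • v3 = c • ![v1, v2, v3, v1 - v2, v1 - v3, v2 - v3] m := by
  have h3le : ∀ a b c : Fin 4, a ≠ b → a ≠ c → b ≠ c →
      f a ≠ 0 → f b ≠ 0 → f c ≠ 0 → False := by
    intro a b c hab hac hbc ha hb hc
    have hcard : ({a, b, c} : Finset (Fin 4)).card = 3 := by
      rw [card_insert_of_notMem (by simp [hab, hac]),
        card_insert_of_notMem (by simp [hbc]), card_singleton]
    have := le_hammingNorm_of_subset ({a, b, c} : Finset (Fin 4)) (by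
      intro z hz
      simp only [mem_insert, mem_singleton] at hz
      rcases hz with rfl | rfl | rfl <;> assumption)
    omega
  by_cases h1 : f 1 = 0 <;> by_cases h2 : f 2 = 0 <;> by_cases h3 : f 3 = 0
  · exact absurd ⟨h1, h2, h3⟩ hne
  · by_cases h0 : f 0 = 0
    · rw [h0, h1, h2] at hsum; simp at hsum; exact absurd hsum h3
    · exact ⟨2, f 3, h3, by rw [h1, h2]; show _ = f 3 • v3; module⟩
  · by_cases h0 : f 0 = 0
    · rw [h0, h1, h3] at hsum; simp at hsum; exact absurd hsum h2
    · exact ⟨1, f 2, h2, by rw [h1, h3]; show _ = f 2 • v2; module⟩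
  · by_cases h0 : f 0 = 0
    · rw [h0, h1] at hsum
      have hf3 : f 3 = -f 2 := by linear_combination hsum
      exact ⟨5, f 2, h2, by rw [h1, hf3]; show _ = f 2 • (v2 - v3); module⟩
    · exact absurd (h3le 0 2 3 (by decide) (by decide) (by decide) h0 h2 h3) id
  · by_cases h0 : f 0 = 0
    · rw [h0, h2, h3] at hsum; simp at hsum; exact absurd hsum h1
    · exact ⟨0, f 1, h1, by rw [h2, h3]; show _ = f 1 • v1; module⟩
  · by_cases h0 : f 0 = 0
    · rw [h0, h2] at hsum
      have hf3 : f 3 = -f 1 := by linear_combination hsum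
      exact ⟨4, f 1, h1, by rw [h2, hf3]; show _ = f 1 • (v1 - v3); module⟩
    · exact absurd (h3le 0 1 3 (by decide) (by decide) (by decide) h0 h1 h3) id
  · by_cases h0 : f 0 = 0
    · rw [h0, h3] at hsum
      have hf2 : f 2 = -f 1 := by linear_combination hsum
      exact ⟨3, f 1, h1, by rw [h3, hf2]; show _ = f 1 • (v1 - v2); module⟩
    · exact absurd (h3le 0 1 2 (by decide) (by decide) (by decide) h0 h1 h2) id
  · exact absurd (h3le 1 2 3 (by decide) (by decide) (by decide) h1 h2 h3) id

lemma key_lemma (F : Type*) [Field F] [DecidableEq F] {u l : ℕ}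
    (v : Fin l → Fin 4 → (Fin u → F))
    (hv0 : ∀ i, v i 0 = 0)
    (hindep : ∀ i, LinearIndependent F ![v i 1, v i 2, v i 3])
    (P : Fin l → Fin 6 → (Fin u → F))
    (hP : ∀ i, P i = ![v i 1, v i 2, v i 3, v i 1 - v i 2, v i 1 - v i 3, v i 2 - v i 3])
    (hpair : ∀ p p' : Fin l × Fin 6, p ≠ p' →
      LinearIndependent F ![P p.1 p.2, P p'.1 p'.2])
    (x : Fin l × Fin 4 → F) (hx : ∑ p, x p • lrcCol F v p = 0)
    (hn : hammingNorm x ≤ 4) : x = 0 := by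
  -- extract the two systems of equations
  have hfst := congrArg Prod.fst hx
  have hsnd := congrArg Prod.snd hx
  rw [Prod.fst_sum] at hfst
  rw [Prod.snd_sum] at hsnd
  simp only [lrcCol, Prod.smul_mk, Prod.fst_zero, Prod.snd_zero] at hfst hsnd
  have hA : ∀ i, ∑ j, x (i, j) = 0 := by
    intro i
    have h := congrFun hfst i
    simp only [Finset.sum_apply, Pi.smul_apply, Pi.single_apply, smul_eq_mul, mul_ite, mul_one,
      mul_zero, Pi.zero_apply, Fintype.sum_prod_type] at h
    rw [Finset.sum_comm] at h
    simpa [Finset.sum_ite_eq] using h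
  set w : Fin l → (Fin u → F) :=
    fun i => x (i, 1) • v i 1 + x (i, 2) • v i 2 + x (i, 3) • v i 3 with hw
  have hB : ∑ i, w i = 0 := by
    rw [← hsnd, Fintype.sum_prod_type]
    refine Finset.sum_congr rfl fun i _ => ?_
    rw [Fin.sum_univ_four, hv0 i]
    simp [hw]
  have hwzero : ∀ i, w i = 0 ↔ (x (i, 1) = 0 ∧ x (i, 2) = 0 ∧ x (i, 3) = 0) := by
    intro i
    constructor
    · intro h
      have li := hindep i
      rw [Fintype.linearIndependent_iff] at li
      have := li ![x (i, 1), x (i, 2), x (i, 3)] (by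
        rw [Fin.sum_univ_three]
        simpa using h)
      exact ⟨this 0, this 1, this 2⟩
    · rintro ⟨h1, h2, h3⟩
      simp [hw, h1, h2, h3]
  set n : Fin l → ℕ := fun i => hammingNorm (fun j => x (i, j)) with hndef
  have hsumn : ∑ i, n i ≤ 4 := by rw [← hammingNorm_prod_sum]; exact hn
  have htwo : ∀ k, ¬(x (k, 1) = 0 ∧ x (k, 2) = 0 ∧ x (k, 3) = 0) → 2 ≤ n k := by
    intro k hk
    have : ∃ j : Fin 4, x (k, j) ≠ 0 := by
      by_contra hcon
      push_neg at hcon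
      exact hk ⟨hcon 1, hcon 2, hcon 3⟩
    obtain ⟨j, hj⟩ := this
    have : ∃ j' : Fin 4, j' ≠ j ∧ x (k, j') ≠ 0 := by
      by_contra hcon
      push_neg at hcon
      have := Finset.sum_eq_single (s := Finset.univ) (f := fun j => x (k, j)) j
        (fun b _ hb => hcon b hb) (fun h => absurd (mem_univ j) h)
      rw [hA k] at this
      exact hj this.symm
    obtain ⟨j', hj'j, hj'⟩ := this
    have hcard : ({j, j'} : Finset (Fin 4)).card = 2 := by
      rw [card_insert_of_notMem (by simp [Ne.symm hj'j]), card_singleton]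
    calc 2 = ({j, j'} : Finset (Fin 4)).card := hcard.symm
      _ ≤ n k := le_hammingNorm_of_subset _ (by
          intro z hz
          simp only [mem_insert, mem_singleton] at hz
          rcases hz with rfl | rfl <;> assumption)
  have hall : ∀ i, x (i, 1) = 0 ∧ x (i, 2) = 0 ∧ x (i, 3) = 0 := by
    by_contra hcon
    push_neg at hcon
    obtain ⟨i, hi⟩ := hcon
    have hi' : ¬(x (i, 1) = 0 ∧ x (i, 2) = 0 ∧ x (i, 3) = 0) := by
      intro h; exact absurd h.2.2 (hi h.1 h.2.1)
    have hwi : w i ≠ 0 := fun h => hi' ((hwzero i).1 h)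
    have : ∃ i', i' ≠ i ∧ w i' ≠ 0 := by
      by_contra hcon2
      push_neg at hcon2
      have := Finset.sum_eq_single (s := Finset.univ) (f := w) i
        (fun b _ hb => hcon2 b hb) (fun h => absurd (mem_univ i) h)
      rw [hB] at this
      exact hwi this.symm
    obtain ⟨i', hii', hwi'⟩ := this
    have hi'' : ¬(x (i', 1) = 0 ∧ x (i', 2) = 0 ∧ x (i', 3) = 0) :=
      fun h => hwi' ((hwzero i').2 h)
    have h2i := htwo i hi'
    have h2i' := htwo i' hi''
    -- the two special blocks account for the whole support
    have hpairsum : n i + n i' ≤ ∑ k, n k := by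
      have : ∑ k ∈ ({i, i'} : Finset (Fin l)), n k ≤ ∑ k, n k :=
        Finset.sum_le_sum_of_subset (subset_univ _)
      rwa [Finset.sum_pair (Ne.symm hii')] at this
    have hrest : ∀ k, k ≠ i → k ≠ i' → w k = 0 := by
      intro k hki hki'
      have hcard : ({i, i', k} : Finset (Fin l)).card = 3 := by
        rw [card_insert_of_notMem (by simp [hii'.symm, Ne.symm hki]),
          card_insert_of_notMem (by simp [Ne.symm hki']), card_singleton]
      have htriple : ∑ m ∈ ({i, i', k} : Finset (Fin l)), n m ≤ ∑ m, n m :=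
        Finset.sum_le_sum_of_subset (subset_univ _)
      rw [Finset.sum_insert (by simp [hii'.symm, Ne.symm hki]),
        Finset.sum_insert (by simp [Ne.symm hki']), Finset.sum_singleton] at htriple
      have hnk : n k = 0 := by omega
      have hxk : (fun j => x (k, j)) = 0 := hammingNorm_eq_zero.mp hnk
      refine (hwzero k).2 ⟨congrFun hxk 1, congrFun hxk 2, congrFun hxk 3⟩
    have hsum2 : w i + w i' = 0 := by
      rw [← Finset.sum_pair (Ne.symm hii'),
        Finset.sum_subset (subset_univ ({i, i'} : Finset (Fin l)))
          (fun k _ hk => hrest k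
            (by simp only [mem_insert, mem_singleton, not_or] at hk; exact hk.1)
            (by simp only [mem_insert, mem_singleton, not_or] at hk; exact hk.2))]
      exact hB
    have hni2 : n i ≤ 2 := by omega
    have hni'2 : n i' ≤ 2 := by omega
    obtain ⟨m, c, hc, heq⟩ := block_lemma (v i 1) (v i 2) (v i 3) (fun j => x (i, j))
      (by have := hA i; rwa [Fin.sum_univ_four] at this) hni2 hi'
    obtain ⟨m', c', hc', heq'⟩ := block_lemma (v i' 1) (v i' 2) (v i' 3) (fun j => x (i', j))
      (by have := hA i'; rwa [Fin.sum_univ_four] at this) hni'2 hi''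
    have hwi_eq : w i = c • P i m := by rw [hP i]; exact heq
    have hwi'_eq : w i' = c' • P i' m' := by rw [hP i']; exact heq'
    have li := hpair (i, m) (i', m') (fun h => hii' (congrArg Prod.fst h).symm)
    rw [Fintype.linearIndependent_iff] at li
    have := li ![c, c'] (by
      rw [Fin.sum_univ_two]
      simp only [Matrix.cons_val_zero, Matrix.cons_val_one, Matrix.head_cons]
      rw [← hwi_eq, ← hwi'_eq]
      exact hsum2)
    exact hc (this 0)
  funext p
  obtain ⟨i, j⟩ := p
  obtain ⟨h1, h2, h3⟩ := hall i
  have h0 : x (i, 0) = 0 := by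
    have := hA i
    rw [Fin.sum_univ_four, h1, h2, h3] at this
    simpa using this
  fin_cases j <;> simpa

/-- If for each `i` the vectors `v_1^{(i)}, v_2^{(i)}, v_3^{(i)}` are linearly independent,
and the `6l` vectors `v_1^{(i)}, v_2^{(i)}, v_3^{(i)}, v_1^{(i)}-v_2^{(i)},
v_1^{(i)}-v_3^{(i)}, v_2^{(i)}-v_3^{(i)}` are pairwise linearly independent, then any four
columns of `H` are linearly independent; equivalently, the code with parity-check matrix `H`
has minimum distance at least `5`. -/
theorem any_four_cols_indep (F : Type*) [Field F] [Fintype F] [DecidableEq F]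
    (u l : ℕ) (hu : 3 ≤ u) (hl : 1 ≤ l)
    (v : Fin l → Fin 4 → (Fin u → F))
    (hv0 : ∀ i, v i 0 = 0)
    (hindep : ∀ i, LinearIndependent F ![v i 1, v i 2, v i 3])
    (P : Fin l → Fin 6 → (Fin u → F))
    (hP : ∀ i, P i = ![v i 1, v i 2, v i 3, v i 1 - v i 2, v i 1 - v i 3, v i 2 - v i 3])
    (hpair : ∀ p p' : Fin l × Fin 6, p ≠ p' →
      LinearIndependent F ![P p.1 p.2, P p'.1 p'.2]) :
    (∀ s : Finset (Fin l × Fin 4), s.card = 4 →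
      LinearIndependent F (fun p : {p // p ∈ s} => lrcCol F v p.1)) ∧
    (∀ x : (Fin l × Fin 4) → F, (∑ p, x p • lrcCol F v p) = 0 → x ≠ 0 →
      5 ≤ hammingNorm x) := by
  constructor
  · intro s hs
    rw [Fintype.linearIndependent_iff]
    intro g hg p
    set x : Fin l × Fin 4 → F := fun p => if h : p ∈ s then g ⟨p, h⟩ else 0 with hxdef
    have hsum : ∑ q, x q • lrcCol F v q = 0 := by
      calc ∑ q, x q • lrcCol F v q = ∑ q ∈ s, x q • lrcCol F v q :=
            (Finset.sum_subset (Finset.subset_univ s)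
              (fun q _ hq => by simp [hxdef, hq])).symm
        _ = ∑ q ∈ s.attach, x q.1 • lrcCol F v q.1 :=
            (Finset.sum_attach s (fun q => x q • lrcCol F v q)).symm
        _ = ∑ q : {p // p ∈ s}, g q • lrcCol F v q.1 := by
            rw [Finset.univ_eq_attach]
            exact Finset.sum_congr rfl fun q _ => by simp [hxdef, q.2]
        _ = 0 := hg
    have hnorm : hammingNorm x ≤ 4 := by
      have hle : hammingNorm x ≤ s.card := by
        apply Finset.card_le_card
        intro q hq
        simp only [hammingNorm, mem_filter, mem_univ, true_and, hxdef] at hq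
        by_contra hqs
        simp [hqs] at hq
      omega
    have hx0 := key_lemma F v hv0 hindep P hP hpair x hsum hnorm
    have := congrFun hx0 p.1
    simpa [hxdef, p.2] using this
  · intro x hx hx0
    by_contra hlt
    push_neg at hlt
    exact hx0 (key_lemma F v hv0 hindep P hP hpair x hx (by omega))
end

section
/- With H as in the construction for d >= 5 LRCs with locality 3: if for some i != j and some s in {1,2,3}, the vector v_s^{(i)} lies in the span of v_1^{(j)} and v_2^{(j)}, then H has five linearly dependent columns, namely h_{i,0}, h_{i,s}, h_{j,0}, h_{j,1}, h_{j,2}; in particular the code with parity-check matrix H has minimum distance at most 5. -/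
/-- If for some `i ≠ j` and some `s ∈ {1,2,3}` the vector `v_s^{(i)}` lies in the span of
`v_1^{(j)}` and `v_2^{(j)}`, then the five columns `h_{i,0}, h_{i,s}, h_{j,0}, h_{j,1},
h_{j,2}` of `H` are linearly dependent; in particular the code with parity-check matrix `H`
has minimum distance at most `5`. -/
theorem five_cols_dep_of_mem_span (F : Type*) [Field F] [Fintype F] [DecidableEq F]
    (u l : ℕ) (hu : 3 ≤ u) (hl : 2 ≤ l)
    (v : Fin l → Fin 4 → (Fin u → F))
    (hv0 : ∀ i, v i 0 = 0)
    (i j : Fin l) (hij : i ≠ j) (s : Fin 4) (hs : s ≠ 0)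
    (hmem : v i s ∈ Submodule.span F {v j 1, v j 2}) :
    ¬ LinearIndependent F
        ![lrcCol F v (i, 0), lrcCol F v (i, s), lrcCol F v (j, 0),
          lrcCol F v (j, 1), lrcCol F v (j, 2)] ∧
    ∃ x : (Fin l × Fin 4) → F, x ≠ 0 ∧ (∑ p, x p • lrcCol F v p) = 0 ∧
      hammingNorm x ≤ 5 := by
  obtain ⟨a, b, hab⟩ := Submodule.mem_span_pair.mp hmem
  constructor
  · rw [Fintype.not_linearIndependent_iff]
    refine ⟨![-1, 1, a + b, -a, -b], ?_, 1, by norm_num⟩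
    rw [Fin.sum_univ_five]
    simp only [Matrix.cons_val_zero, Matrix.cons_val_one, Matrix.head_cons,
      Matrix.cons_val_two, Matrix.tail_cons, Matrix.cons_val_three, Matrix.cons_val_four,
      lrcCol, hv0, Prod.smul_mk, Prod.mk_add_mk, Prod.mk_eq_zero, smul_zero]
    constructor
    · funext t; simp [Pi.single_apply]; split_ifs <;> ring
    · rw [← hab]; funext t; simp
  · set x : (Fin l × Fin 4) → F := fun p =>
      if p = (i, 0) then -1 else if p = (i, s) then 1 else if p = (j, 0) then a + b
      else if p = (j, 1) then -a else if p = (j, 2) then -b else 0 with hx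
    have h10 : (i, (0 : Fin 4)) ≠ (i, s) := by simp [Ne, Prod.ext_iff, hs.symm]
    have hji : ∀ t : Fin 4, ∀ t' : Fin 4, (i, t) ≠ (j, t') := by
      intro t t'; simp [Ne, Prod.ext_iff, hij]
    have h01 : ((0 : Fin 4)) ≠ 1 := by decide
    have h02 : ((0 : Fin 4)) ≠ 2 := by decide
    have h12 : ((1 : Fin 4)) ≠ 2 := by decide
    refine ⟨x, ?_, ?_, ?_⟩
    · intro h
      have := congrFun h (i, 0)
      simp [hx] at this
    · have hS : ∀ p : Fin l × Fin 4,
          p ∉ ({(i, (0:Fin 4)), (i, s), (j, 0), (j, 1), (j, 2)} : Finset (Fin l × Fin 4)) →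
          x p • lrcCol F v p = 0 := by
        intro p hp
        simp only [Finset.mem_insert, Finset.mem_singleton, not_or] at hp
        obtain ⟨h1, h2, h3, h4, h5⟩ := hp
        simp [hx, h1, h2, h3, h4, h5]
      rw [← Finset.sum_subset (Finset.subset_univ _) (fun p _ hp => hS p hp)]
      have e1 : (i, s) ∉ ({(j, (0:Fin 4)), (j, 1), (j, 2)} : Finset (Fin l × Fin 4)) := by
        simp [Prod.ext_iff, hij]
      have e0 : (i, (0:Fin 4)) ∉ ({(i, s), (j, 0), (j, 1), (j, 2)} : Finset (Fin l × Fin 4)) := by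
        simp [Prod.ext_iff, hij, hs.symm]
      have e2 : (j, (0:Fin 4)) ∉ ({(j, (1:Fin 4)), (j, 2)} : Finset (Fin l × Fin 4)) := by
        simp [Prod.ext_iff]
      have e3 : (j, (1:Fin 4)) ∉ ({(j, (2:Fin 4))} : Finset (Fin l × Fin 4)) := by
        simp [Prod.ext_iff]
      rw [show ({(i, (0:Fin 4)), (i, s), (j, 0), (j, 1), (j, 2)} : Finset (Fin l × Fin 4))
        = insert (i,(0:Fin 4)) (insert (i,s) (insert (j,(0:Fin 4)) (insert (j,(1:Fin 4))
          {(j,(2:Fin 4))}))) from rfl,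
        Finset.sum_insert e0, Finset.sum_insert e1, Finset.sum_insert e2,
        Finset.sum_insert e3, Finset.sum_singleton]
      have hs' : (0:Fin 4) ≠ s := Ne.symm hs
      have hji' : j ≠ i := Ne.symm hij
      simp only [hx, lrcCol, hv0]
      simp only [Prod.mk.injEq, hij, hji', hs, hs', false_and, and_false, if_false,
        and_true, true_and, if_true, and_self]
      rw [if_neg (by decide : ¬((2:Fin 4) = 0)), if_neg (by decide : ¬((2:Fin 4) = 1)),
        if_neg (by decide : ¬((1:Fin 4) = 0))]
      refine Prod.ext ?_ ?_
      · show (-1:F) • (Pi.single i 1 : Fin l → F) + ((1:F) • (Pi.single i 1 : Fin l → F) +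
          ((a+b) • (Pi.single j 1 : Fin l → F) + ((-a) • (Pi.single j 1 : Fin l → F) + (-b) • (Pi.single j 1 : Fin l → F)))) = 0
        module
      · show (-1:F) • (0:Fin u → F) + ((1:F) • v i s +
          ((a+b) • (0:Fin u → F) + ((-a) • v j 1 + (-b) • v j 2))) = 0
        rw [← hab]; funext t; simp; ring
    · calc hammingNorm x = (Finset.univ.filter fun p => x p ≠ 0).card := rfl
        _ ≤ ({(i, (0:Fin 4)), (i, s), (j, 0), (j, 1), (j, 2)} : Finset (Fin l × Fin 4)).card := by
            apply Finset.card_le_card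
            intro p hp
            simp only [Finset.mem_filter, Finset.mem_univ, true_and] at hp
            by_contra hc
            simp only [Finset.mem_insert, Finset.mem_singleton, not_or] at hc
            obtain ⟨h1, h2, h3, h4, h5⟩ := hc
            exact hp (by simp [hx, h1, h2, h3, h4, h5])
        _ ≤ 5 := by
            apply le_trans (Finset.card_insert_le _ _)
            apply Nat.succ_le_succ
            apply le_trans (Finset.card_insert_le _ _)
            apply Nat.succ_le_succ
            apply le_trans (Finset.card_insert_le _ _)
            apply Nat.succ_le_succ
            apply le_trans (Finset.card_insert_le _ _)
            apply Nat.succ_le_succ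
            simp
end

section
/- With H as in the construction for d >= 5 LRCs with locality 3: if for some i != j, some s != t in {1,2,3}, the vector v_s^{(i)} - v_t^{(i)} lies in the span of v_1^{(j)} - v_2^{(j)} and v_1^{(j)} - v_3^{(j)}, then the five columns h_{i,s}, h_{i,t}, h_{j,1}, h_{j,2}, h_{j,3} of H are linearly dependent. -/
/-- If for some `i ≠ j` and some `s ≠ t` in `{1,2,3}` the vector `v_s^{(i)} - v_t^{(i)}`
lies in the span of `v_1^{(j)} - v_2^{(j)}` and `v_1^{(j)} - v_3^{(j)}`, then the five
columns `h_{i,s}, h_{i,t}, h_{j,1}, h_{j,2}, h_{j,3}` of `H` are linearly dependent. -/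
theorem five_cols_dep_of_diff_mem_span (F : Type*) [Field F] [DecidableEq F]
    (u l : ℕ) (hu : 3 ≤ u) (hl : 2 ≤ l)
    (v : Fin l → Fin 4 → (Fin u → F))
    (hv0 : ∀ i, v i 0 = 0)
    (i j : Fin l) (hij : i ≠ j) (s t : Fin 4) (hs : s ≠ 0) (ht : t ≠ 0) (hst : s ≠ t)
    (hmem : v i s - v i t ∈ Submodule.span F {v j 1 - v j 2, v j 1 - v j 3}) :
    ¬ LinearIndependent F
        ![lrcCol F v (i, s), lrcCol F v (i, t), lrcCol F v (j, 1),
          lrcCol F v (j, 2), lrcCol F v (j, 3)] := by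
  rw [Submodule.mem_span_pair] at hmem
  obtain ⟨a, b, hab⟩ := hmem
  rw [Fintype.not_linearIndependent_iff]
  refine ⟨![1, -1, -(a+b), a, b], ?_, 0, by norm_num⟩
  have : ∑ k : Fin 5, ![(1:F), -1, -(a+b), a, b] k •
      ![lrcCol F v (i, s), lrcCol F v (i, t), lrcCol F v (j, 1),
        lrcCol F v (j, 2), lrcCol F v (j, 3)] k =
      (1:F) • lrcCol F v (i, s) + (-1:F) • lrcCol F v (i, t) +
      (-(a+b)) • lrcCol F v (j, 1) + a • lrcCol F v (j, 2) + b • lrcCol F v (j, 3) := by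
    simp [Fin.sum_univ_five]
  rw [this]
  simp only [lrcCol, Prod.smul_mk, Prod.mk_add_mk, Prod.mk_eq_zero]
  constructor
  · funext k
    simp [Pi.single_apply]
    split_ifs <;> ring
  · funext k
    have h := congrFun hab k
    simp only [Pi.add_apply, Pi.sub_apply, Pi.smul_apply, smul_eq_mul] at h
    simp only [Pi.add_apply, Pi.smul_apply, Pi.zero_apply, smul_eq_mul]
    linear_combination -h
end

section
/- Let S = {W_1, ..., W_l} be a collection of r-dimensional subspaces of F_q^u with W_i ∩ W_j = {0} for i != j, and for each i let v_1^{(i)}, ..., v_r^{(i)} be a basis of W_i. Form the matrix H in F_q^{(l+u) x (r+1)l} with columns h_{i,j} = (e_i; v_j^{(i)}) for i in [l], 0 <= j <= r, where v_0^{(i)} = 0 and e_i is the i-th standard basis vector of F_q^l. Then any five columns of H are linearly independent; equivalently, the code with parity-check matrix H has minimum distance at least 6. -/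
/-- The column `h_{i,j} = (e_i ; v_j^{(i)})` of the block parity-check matrix `H`
in the partial-spread construction. -/
def spreadCol (F : Type*) [Field F] {l u r : ℕ}
    (v : Fin l → Fin (r + 1) → (Fin u → F)) (p : Fin l × Fin (r + 1)) :
    (Fin l → F) × (Fin u → F) :=
  (Pi.single p.1 (1 : F), v p.1 p.2)

private lemma spread_key (F : Type*) [Field F] [Fintype F] [DecidableEq F]
    (r u l : ℕ)
    (W : Fin l → Submodule F (Fin u → F))
    (hdisj : ∀ i j, i ≠ j → W i ⊓ W j = ⊥)
    (v : Fin l → Fin (r + 1) → (Fin u → F))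
    (hv0 : ∀ i, v i 0 = 0)
    (hbasis1 : ∀ i, LinearIndependent F (fun j : Fin r => v i j.succ))
    (hl : 2 ≤ l)
    (hbasis2 : ∀ i, Submodule.span F (Set.range fun j : Fin r => v i j.succ) = W i)
    (x : (Fin l × Fin (r + 1)) → F)
    (hsum : (∑ p, x p • spreadCol F v p) = 0)
    (hcard : (Finset.univ.filter fun p => x p ≠ 0).card ≤ 5) : x = 0 := by
  -- first component: row sums vanish
  have h1 : ∀ i : Fin l, ∑ j, x (i, j) = 0 := by
    intro i
    have hfst := congrArg (fun z => z.1 i) hsum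
    simp only [spreadCol, Prod.smul_mk, Prod.fst_sum, Finset.sum_apply, Pi.smul_apply,
      Pi.single_apply, smul_eq_mul, mul_ite, mul_one, mul_zero, Prod.fst_zero,
      Pi.zero_apply] at hfst
    rw [Fintype.sum_prod_type, Finset.sum_comm] at hfst
    simpa [Finset.sum_ite_eq] using hfst
  -- second component
  set w : Fin l → (Fin u → F) := fun i => ∑ j : Fin r, x (i, j.succ) • v i j.succ with hw
  have h2 : ∑ i, w i = 0 := by
    have hsnd := congrArg (fun z => z.2) hsum
    simp only [spreadCol, Prod.smul_mk, Prod.snd_sum, Prod.snd_zero] at hsnd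
    rw [Fintype.sum_prod_type] at hsnd
    rw [← hsnd]
    refine Finset.sum_congr rfl fun i _ => ?_
    rw [Fin.sum_univ_succ, hv0 i, smul_zero, zero_add]
  -- each nonzero row has at least two nonzero entries
  have hpair : ∀ i : Fin l, (∃ j, x (i, j) ≠ 0) →
      ∃ j j', j ≠ j' ∧ x (i, j) ≠ 0 ∧ x (i, j') ≠ 0 := by
    intro i ⟨j0, hj0⟩
    by_cases h : ∃ j', j' ≠ j0 ∧ x (i, j') ≠ 0
    · obtain ⟨j', hj'1, hj'2⟩ := h
      exact ⟨j0, j', Ne.symm hj'1, hj0, hj'2⟩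
    · push_neg at h
      have : ∑ j, x (i, j) = x (i, j0) :=
        Finset.sum_eq_single j0 (fun b _ hb => h b hb) (by simp)
      rw [h1 i] at this
      exact absurd this.symm hj0
  -- the set of involved rows
  set T : Finset (Fin l) :=
    (Finset.univ.filter fun p : Fin l × Fin (r + 1) => x p ≠ 0).image Prod.fst with hT
  have hTcard : T.card ≤ 2 := by
    rw [Finset.card_eq_sum_card_image Prod.fst] at hcard
    have hfib : ∀ i ∈ T, 2 ≤ ((Finset.univ.filter fun p : Fin l × Fin (r + 1) => x p ≠ 0).filter
        fun p => p.1 = i).card := by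
      intro i hi
      rw [hT, Finset.mem_image] at hi
      obtain ⟨⟨i', j0⟩, hp, hpi⟩ := hi
      cases hpi
      rw [Finset.mem_filter] at hp
      obtain ⟨j, j', hjj', hj, hj'⟩ := hpair i' ⟨j0, hp.2⟩
      refine Finset.one_lt_card.mpr ⟨(i', j), ?_, (i', j'), ?_, ?_⟩ <;>
        simp [hj, hj', hjj']
    rw [← hT] at hcard
    have := Finset.card_nsmul_le_sum T _ 2 hfib
    simp only [smul_eq_mul] at this
    omega
  -- membership and vanishing of w
  have hwmem : ∀ i, w i ∈ W i := by
    intro i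
    rw [← hbasis2 i]
    exact Submodule.sum_smul_mem _ _ fun j _ => Submodule.subset_span ⟨j, rfl⟩
  have hwoff : ∀ i ∉ T, w i = 0 := by
    intro i hi
    have hx0 : ∀ j, x (i, j) = 0 := by
      intro j
      by_contra hj
      exact hi (Finset.mem_image.mpr ⟨(i, j), Finset.mem_filter.mpr ⟨Finset.mem_univ _, hj⟩, rfl⟩)
    simp [hw, hx0]
  have h2T : ∑ i ∈ T, w i = 0 := by
    rw [← h2]
    exact (Finset.sum_subset T.subset_univ fun i _ hi => hwoff i hi)
  have hD : ∀ i, w i = 0 := by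
    intro i
    by_cases hi : i ∈ T
    · have h' : w i + ∑ i' ∈ T.erase i, w i' = 0 := by
        rw [Finset.add_sum_erase T w hi]; exact h2T
      have hc : (T.erase i).card ≤ 1 := by
        have := Finset.card_erase_of_mem hi; omega
      have : Nonempty (Fin l) := ⟨⟨0, by omega⟩⟩
      rcases Finset.card_le_one_iff_subset_singleton.mp hc with ⟨b, hb⟩
      by_cases hbmem : b ∈ T.erase i
      · have heq : T.erase i = {b} :=
          Finset.Subset.antisymm hb (Finset.singleton_subset_iff.mpr hbmem)
        rw [heq, Finset.sum_singleton] at h'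
        have hbi : b ≠ i := Finset.ne_of_mem_erase hbmem
        have hmem : w i ∈ W i ⊓ W b := by
          refine ⟨hwmem i, ?_⟩
          have : w i = -w b := eq_neg_of_add_eq_zero_left h'
          rw [this]
          exact (W b).neg_mem (hwmem b)
        rw [hdisj i b (Ne.symm hbi)] at hmem
        exact hmem
      · have heq : T.erase i = ∅ := by
          refine Finset.eq_empty_iff_forall_notMem.mpr fun y hy => ?_
          have := hb hy
          rw [Finset.mem_singleton] at this
          exact hbmem (this ▸ hy)
        rw [heq, Finset.sum_empty, add_zero] at h'
        exact h'
    · exact hwoff i hi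
  -- conclude all coefficients vanish
  have hsucc : ∀ i (j : Fin r), x (i, j.succ) = 0 := by
    intro i
    have hDi := hD i
    simp only [hw] at hDi
    exact Fintype.linearIndependent_iff.mp (hbasis1 i) (fun j => x (i, j.succ)) hDi
  have hzero : ∀ i (j : Fin (r + 1)), x (i, j) = 0 := by
    intro i j
    induction j using Fin.cases with
    | zero =>
      have := h1 i
      rw [Fin.sum_univ_succ] at this
      simpa [hsucc i] using this
    | succ j => exact hsucc i j
  funext p
  exact hzero p.1 p.2

/-- Let `W_1, …, W_l` be `r`-dimensional subspaces of `F_q^u` pairwise intersecting only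
in `0`, with `v_1^{(i)}, …, v_r^{(i)}` a basis of `W_i`. Then any five columns of the
matrix `H` with columns `h_{i,j} = (e_i ; v_j^{(i)})` (where `v_0^{(i)} = 0`) are linearly
independent; equivalently, the code with parity-check matrix `H` has minimum distance at
least `6`. -/
theorem any_five_cols_indep (F : Type*) [Field F] [Fintype F] [DecidableEq F]
    (q r u l : ℕ) (hq : Fintype.card F = q) (hr : 2 ≤ r) (hu : 2 * r ≤ u) (hl : 2 ≤ l)
    (W : Fin l → Submodule F (Fin u → F))
    (hdim : ∀ i, Module.finrank F (W i) = r)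
    (hdisj : ∀ i j, i ≠ j → W i ⊓ W j = ⊥)
    (v : Fin l → Fin (r + 1) → (Fin u → F))
    (hv0 : ∀ i, v i 0 = 0)
    (hbasis1 : ∀ i, LinearIndependent F (fun j : Fin r => v i j.succ))
    (hbasis2 : ∀ i, Submodule.span F (Set.range fun j : Fin r => v i j.succ) = W i) :
    (∀ s : Finset (Fin l × Fin (r + 1)), s.card = 5 →
      LinearIndependent F (fun p : {p // p ∈ s} => spreadCol F v p.1)) ∧
    (∀ x : (Fin l × Fin (r + 1)) → F, (∑ p, x p • spreadCol F v p) = 0 → x ≠ 0 →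
      6 ≤ hammingNorm x) := by
  have key := spread_key F r u l W hdisj v hv0 hbasis1 hl hbasis2
  constructor
  · intro s hs
    rw [Fintype.linearIndependent_iff]
    intro g hg
    set x : (Fin l × Fin (r + 1)) → F := fun p => if h : p ∈ s then g ⟨p, h⟩ else 0 with hx
    have hsum : (∑ p, x p • spreadCol F v p) = 0 := by
      rw [← Finset.sum_subset s.subset_univ (fun p _ hp => by simp [hx, hp])]
      rw [← Finset.sum_attach s (fun p => x p • spreadCol F v p)]
      rw [← hg, Finset.univ_eq_attach]
      refine Finset.sum_congr rfl fun p _ => ?_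
      simp [hx, p.2]
    have hc : (Finset.univ.filter fun p => x p ≠ 0).card ≤ 5 := by
      rw [← hs]
      refine Finset.card_le_card fun p hp => ?_
      rw [Finset.mem_filter] at hp
      by_contra hps
      exact hp.2 (by simp [hx, hps])
    have hx0 := key x hsum hc
    intro p
    have := congrFun hx0 p.1
    simpa [hx, p.2] using this
  · intro x hsum hne
    by_contra hlt
    push_neg at hlt
    have hc : (Finset.univ.filter fun p => x p ≠ 0).card ≤ 5 := by
      have : hammingNorm x = (Finset.univ.filter fun p => x p ≠ 0).card := rfl
      omega
    exact hne (key x hsum hc)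
end

section
/- In the partial-spread LRC construction, if there exist three indices i1, i2, i3 and vectors w_k in W_{i_k} appearing as columns (i.e., w_k = v_1^{(i_k)}) such that w_1 + w_2 = w_3, then the six columns h_{i1,0}, h_{i1,1}, h_{i2,0}, h_{i2,1}, h_{i3,0}, h_{i3,1} of H are linearly dependent; hence the code with parity-check matrix H has minimum distance at most 6. -/
/-- In the partial-spread LRC construction, if there are three distinct indices
`i1, i2, i3` with `v_1^{(i1)} + v_1^{(i2)} = v_1^{(i3)}`, then the six columns
`h_{i1,0}, h_{i1,1}, h_{i2,0}, h_{i2,1}, h_{i3,0}, h_{i3,1}` of `H` are linearly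
dependent; hence the code with parity-check matrix `H` has minimum distance at most `6`. -/
theorem six_cols_dep (F : Type*) [Field F] [DecidableEq F]
    (r u l : ℕ) (hr : 2 ≤ r) (hl : 3 ≤ l)
    (W : Fin l → Submodule F (Fin u → F))
    (hdim : ∀ i, Module.finrank F (W i) = r)
    (hdisj : ∀ i j, i ≠ j → W i ⊓ W j = ⊥)
    (v : Fin l → Fin (r + 1) → (Fin u → F))
    (hv0 : ∀ i, v i 0 = 0)
    (hbasis1 : ∀ i, LinearIndependent F (fun j : Fin r => v i j.succ))
    (hbasis2 : ∀ i, Submodule.span F (Set.range fun j : Fin r => v i j.succ) = W i)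
    (i1 i2 i3 : Fin l) (h12 : i1 ≠ i2) (h13 : i1 ≠ i3) (h23 : i2 ≠ i3)
    (hsum : v i1 1 + v i2 1 = v i3 1) :
    ¬ LinearIndependent F
        ![spreadCol F v (i1, 0), spreadCol F v (i1, 1), spreadCol F v (i2, 0),
          spreadCol F v (i2, 1), spreadCol F v (i3, 0), spreadCol F v (i3, 1)] ∧
    ∃ x : (Fin l × Fin (r + 1)) → F, x ≠ 0 ∧ (∑ p, x p • spreadCol F v p) = 0 ∧
      hammingNorm x ≤ 6 := by
  have h01 : (0 : Fin (r + 1)) ≠ 1 := by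
    simp [Fin.ext_iff, Fin.val_one']
    omega
  have key : (-1 : F) • spreadCol F v (i1, 0) + (1 : F) • spreadCol F v (i1, 1) +
      (-1 : F) • spreadCol F v (i2, 0) + (1 : F) • spreadCol F v (i2, 1) +
      (1 : F) • spreadCol F v (i3, 0) + (-1 : F) • spreadCol F v (i3, 1) = 0 := by
    apply Prod.ext
    · simp [spreadCol]
    · simp [spreadCol, hv0]
      rw [← hsum]
      abel
  constructor
  · rw [Fintype.not_linearIndependent_iff]
    refine ⟨![-1, 1, -1, 1, 1, -1], ?_, ⟨1, by norm_num⟩⟩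
    rw [Fin.sum_univ_six]
    simpa [show (![(-1:F),1,-1,1,1,-1]) 5 = -1 from rfl] using key
  · set x : (Fin l × Fin (r + 1)) → F := fun p =>
      (if p = (i1, 0) then (-1 : F) else 0) + (if p = (i1, 1) then 1 else 0) +
      (if p = (i2, 0) then -1 else 0) + (if p = (i2, 1) then 1 else 0) +
      (if p = (i3, 0) then 1 else 0) + (if p = (i3, 1) then -1 else 0) with hx
    refine ⟨x, ?_, ?_, ?_⟩
    · intro h
      have : x (i1, 1) = 0 := by rw [h]; rfl
      simp [hx, Prod.ext_iff, h01.symm, h12, h13] at this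
    · simp only [hx, add_smul, Finset.sum_add_distrib, ite_smul, zero_smul,
        Finset.sum_ite_eq']
      simpa using key
    · have hsub : Finset.univ.filter (fun p => x p ≠ 0) ⊆
        {(i1, (0 : Fin (r+1))), (i1, 1), (i2, 0), (i2, 1), (i3, 0), (i3, 1)} := by
        intro p hp
        simp only [Finset.mem_filter, Finset.mem_univ, true_and] at hp
        simp only [Finset.mem_insert, Finset.mem_singleton]
        by_contra hc
        push_neg at hc
        obtain ⟨a, b, c, d, e, f⟩ := hc
        simp [hx, a, b, c, d, e, f] at hp
      calc hammingNorm x ≤ _ := Finset.card_le_card hsub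
        _ ≤ 6 := by
          apply le_trans (Finset.card_insert_le _ _)
          apply Nat.succ_le_succ
          apply le_trans (Finset.card_insert_le _ _)
          apply Nat.succ_le_succ
          apply le_trans (Finset.card_insert_le _ _)
          apply Nat.succ_le_succ
          apply le_trans (Finset.card_insert_le _ _)
          apply Nat.succ_le_succ
          apply le_trans (Finset.card_insert_le _ _)
          apply Nat.succ_le_succ
          simp
end

section
/- Let u ≡ z (mod r) with 0 <= z < r. Then there exists a partial r-spread of F_q^u of size at least (q^u - q^r(q^z - 1) - 1)/(q^r - 1). -/
/-!
Write `F_q^u = F_q^r × F_q^m` with `m = u - r ≥ r` and identify `F_q^m` with the field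
`F_{q^m}`. For an injective linear `ι : F_q^r → F_{q^m}`, the graphs of `x ↦ a * ι x`,
`a ∈ F_{q^m}`, are `q^m` subspaces of dimension `r` meeting pairwise trivially (the difference
of two such maps is multiplication by a nonzero scalar after `ι`), and each meets `0 × F_q^m`
trivially. Recursing into `F_q^m` and stopping below dimension `2r`, where one subspace is
taken, gives `q^(u-r) + q^(u-2r) + ⋯ + q^(z+r) + 1` subspaces, which is the bound.
-/

open Module Function

section PartialSpread

variable {K V V₂ : Type*} [Field K] [AddCommGroup V] [Module K V] [AddCommGroup V₂] [Module K V₂]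

def IsPartialSpread (r : ℕ) (S : Finset (Submodule K V)) : Prop :=
  (∀ W ∈ S, finrank K W = r) ∧ ∀ W ∈ S, ∀ W' ∈ S, W ≠ W' → W ⊓ W' = ⊥

lemma Submodule.ne_of_inf_eq_bot {W W' : Submodule K V} (hW : finrank K W ≠ 0)
    (h : W ⊓ W' = ⊥) : W ≠ W' := by
  rintro rfl
  rw [inf_idem] at h
  subst h
  simp at hW

namespace IsPartialSpread

variable {r : ℕ} {S T : Finset (Submodule K V)}

lemma singleton {W : Submodule K V} (hW : finrank K W = r) : IsPartialSpread r {W} :=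
  ⟨by simpa, by simp⟩

lemma image_map [DecidableEq (Submodule K V₂)] (hS : IsPartialSpread r S) {f : V →ₗ[K] V₂}
    (hf : Injective f) : IsPartialSpread r (S.image (Submodule.map f)) := by
  refine ⟨?_, ?_⟩
  · simp only [Finset.mem_image, forall_exists_index, and_imp]
    rintro _ W hW rfl
    exact (Submodule.equivMapOfInjective f hf W).finrank_eq.symm.trans (hS.1 W hW)
  · simp only [Finset.mem_image, forall_exists_index, and_imp]
    rintro _ W hW rfl _ W' hW' rfl hne
    rw [← Submodule.map_inf f hf, hS.2 W hW W' hW' (ne_of_apply_ne _ hne), Submodule.map_bot]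

lemma union [DecidableEq (Submodule K V)] (hS : IsPartialSpread r S) (hT : IsPartialSpread r T)
    (hST : ∀ W ∈ S, ∀ W' ∈ T, W ⊓ W' = ⊥) : IsPartialSpread r (S ∪ T) := by
  refine ⟨fun W hW => (Finset.mem_union.mp hW).elim (hS.1 W) (hT.1 W), ?_⟩
  intro W hW W' hW' hne
  rcases Finset.mem_union.mp hW with hW | hW <;> rcases Finset.mem_union.mp hW' with hW' | hW'
  · exact hS.2 W hW W' hW' hne
  · exact hST W hW W' hW'
  · exact inf_comm W W' ▸ hST W' hW' W hW
  · exact hT.2 W hW W' hW' hne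

lemma card_union [DecidableEq (Submodule K V)] (hr : r ≠ 0) (hS : IsPartialSpread r S)
    (hST : ∀ W ∈ S, ∀ W' ∈ T, W ⊓ W' = ⊥) : (S ∪ T).card = S.card + T.card :=
  Finset.card_union_of_disjoint <| Finset.disjoint_left.mpr fun W hW hW' =>
    Submodule.ne_of_inf_eq_bot (hS.1 W hW ▸ hr) (hST W hW W hW') rfl

end IsPartialSpread

namespace LinearMap

section Graph

variable {R M M₂ : Type*} [Ring R] [AddCommGroup M] [AddCommGroup M₂] [Module R M] [Module R M₂]

lemma finrank_graph [StrongRankCondition R] (f : M →ₗ[R] M₂) :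
    finrank R f.graph = finrank R M := by
  rw [graph_eq_range_prod]
  exact finrank_range_of_inj fun x y h => congrArg Prod.fst h

lemma graph_inf_graph_eq_bot {f g : M →ₗ[R] M₂} (h : Injective (f - g)) :
    f.graph ⊓ g.graph = ⊥ := by
  refine (Submodule.eq_bot_iff _).mpr fun ⟨x, y⟩ ⟨hf, hg⟩ => ?_
  simp only [SetLike.mem_coe, mem_graph_iff] at hf hg
  obtain rfl : x = 0 := h (by simp [← hf, ← hg])
  simp [hf]

lemma graph_inf_map_inr_eq_bot (f : M →ₗ[R] M₂) (W : Submodule R M₂) :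
    f.graph ⊓ W.map (inr R M M₂) = ⊥ := by
  refine (Submodule.eq_bot_iff _).mpr fun ⟨x, y⟩ ⟨hf, hW⟩ => ?_
  obtain ⟨w, -, hw⟩ := hW
  simp only [inr_apply, Prod.ext_iff] at hw
  simp only [SetLike.mem_coe, mem_graph_iff, ← hw.1, map_zero] at hf
  simp [← hw.1, hf]

end Graph

variable {L M : Type*} [Ring L] [NoZeroDivisors L] [Algebra K L] [AddCommGroup M] [Module K M]

lemma injective_mulLeft_comp_sub {ι : M →ₗ[K] L} (hι : Injective ι) {a b : L} (hab : a ≠ b) :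
    Injective (mulLeft K a ∘ₗ ι - mulLeft K b ∘ₗ ι) := by
  refine (injective_iff_map_eq_zero _).mpr fun x hx => hι ?_
  simp only [sub_apply, comp_apply, mulLeft_apply, ← sub_mul, mul_eq_zero, sub_eq_zero] at hx
  simpa using hx.resolve_left hab

end LinearMap

section GraphSpread

open LinearMap

variable {L M : Type*} [Ring L] [NoZeroDivisors L] [Algebra K L] [Fintype L]
  [AddCommGroup M] [Module K M]
  [DecidableEq (Submodule K (M × L))] {ι : M →ₗ[K] L}

lemma isPartialSpread_image_graph_mulLeft_comp (hι : Injective ι) :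
    IsPartialSpread (finrank K M) (Finset.univ.image fun a : L => (mulLeft K a ∘ₗ ι).graph) := by
  refine ⟨by simp [finrank_graph], ?_⟩
  simp only [Finset.mem_image, Finset.mem_univ, true_and, forall_exists_index]
  rintro _ a rfl _ b rfl hne
  exact graph_inf_graph_eq_bot (injective_mulLeft_comp_sub hι fun h => hne (h ▸ rfl))

lemma card_image_graph_mulLeft_comp (hι : Injective ι) (hM : finrank K M ≠ 0) :
    (Finset.univ.image fun a : L => (mulLeft K a ∘ₗ ι).graph).card = Fintype.card L := by
  refine Finset.card_image_of_injective _ fun a b h => ?_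
  by_contra hab
  refine Submodule.ne_of_inf_eq_bot ?_
    (graph_inf_graph_eq_bot (injective_mulLeft_comp_sub hι hab)) h
  rwa [finrank_graph]

end GraphSpread

open LinearMap in
lemma IsPartialSpread.exists_prod_field {L M : Type*} [Ring L] [NoZeroDivisors L] [Algebra K L]
    [Fintype L] [AddCommGroup M] [Module K M] [FiniteDimensional K L] [FiniteDimensional K M] {r : ℕ}
    (hr : r ≠ 0) (hM : finrank K M = r) (hML : r ≤ finrank K L) {S : Finset (Submodule K L)}
    (hS : IsPartialSpread r S) :
    ∃ T : Finset (Submodule K (M × L)), IsPartialSpread r T ∧ T.card = Fintype.card L + S.card := by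
  classical
  obtain ⟨ι, hι⟩ := finrank_le_iff_exists_linearMap.mp (hM ▸ hML)
  have hG := isPartialSpread_image_graph_mulLeft_comp hι
  rw [hM] at hG
  have hGS : ∀ W ∈ Finset.univ.image fun a : L => (mulLeft K a ∘ₗ ι).graph,
      ∀ W' ∈ S.image (Submodule.map (inr K M L)), W ⊓ W' = ⊥ := by
    simp only [Finset.mem_image, Finset.mem_univ, true_and, forall_exists_index, and_imp]
    rintro _ a rfl _ W - rfl
    exact graph_inf_map_inr_eq_bot _ W
  refine ⟨_, hG.union (hS.image_map inr_injective) hGS, ?_⟩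
  rw [hG.card_union hr hGS, card_image_graph_mulLeft_comp hι (hM ▸ hr),
    Finset.card_image_of_injective _ (Submodule.map_injective_of_injective inr_injective)]

end PartialSpread

-- The bound of `exists_partial_spread`, rearranged so that no truncated subtraction occurs.
theorem exists_isPartialSpread_fin (K : Type*) [Field K] [Fintype K] {r : ℕ} (hr : r ≠ 0)
    (n : ℕ) (hrn : r ≤ n) :
    ∃ S : Finset (Submodule K (Fin n → K)), IsPartialSpread r S ∧
      Fintype.card K ^ n + Fintype.card K ^ r ≤
        S.card * (Fintype.card K ^ r - 1) + Fintype.card K ^ (r + n % r) + 1 := by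
  induction n using Nat.strong_induction_on with
  | _ n ih =>
  set q := Fintype.card K
  have hqr : 1 ≤ q ^ r := Nat.one_le_pow _ _ Fintype.card_pos
  by_cases hn : n < r + r
  · obtain ⟨ι, hι⟩ := (finrank_le_iff_exists_linearMap (M := Fin r → K)
      (M' := Fin n → K)).mp (by rwa [finrank_fin_fun, finrank_fin_fun])
    refine ⟨{LinearMap.range ι},
      .singleton ((LinearMap.finrank_range_of_inj hι).trans (finrank_fin_fun K)), ?_⟩
    have hmod : r + n % r = n := by
      rw [Nat.mod_eq_sub_mod hrn, Nat.mod_eq_of_lt (by omega)]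
      omega
    rw [hmod, Finset.card_singleton, one_mul]
    omega
  · obtain ⟨m, rfl⟩ : ∃ m, n = r + m := ⟨n - r, by omega⟩
    obtain ⟨S, hS, hcard⟩ := ih m (by omega) (by omega)
    obtain ⟨p, _⟩ := CharP.exists K
    have : Fact p.Prime := ⟨CharP.char_is_prime K p⟩
    have : NeZero m := ⟨by omega⟩
    let L := FiniteField.Extension K p m
    let : Fintype L := .ofFinite L
    have hL : finrank K L = m := FiniteField.finrank_extension K p m
    let e : (Fin m → K) ≃ₗ[K] L := .ofFinrankEq _ _ (by simp [hL])
    obtain ⟨T, hT, hTcard⟩ := (hS.image_map e.injective).exists_prod_field hr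
      (finrank_fin_fun K) (by omega)
    let e' : ((Fin r → K) × L) ≃ₗ[K] (Fin (r + m) → K) := .ofFinrankEq _ _ (by simp [hL])
    refine ⟨T.image (Submodule.map e'), hT.image_map e'.injective, ?_⟩
    have hLcard : Fintype.card L = q ^ m := by
      rw [Fintype.card_eq_nat_card, FiniteField.natCard_extension, ← Fintype.card_eq_nat_card]
    rw [Finset.card_image_of_injective _ (Submodule.map_injective_of_injective e'.injective),
      hTcard, hLcard, Finset.card_image_of_injective _ (Submodule.map_injective_of_injective
      e.injective), Nat.add_mod_left, pow_add]
    obtain ⟨t, ht⟩ : ∃ t, q ^ r = t + 1 := ⟨q ^ r - 1, by omega⟩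
    rw [ht, Nat.add_sub_cancel] at hcard ⊢
    nlinarith

/-- Let `u ≡ z (mod r)` with `0 ≤ z < r`. Then there exists a partial `r`-spread of
`F_q^u` of size at least `(q^u - q^r(q^z - 1) - 1)/(q^r - 1)`. -/
theorem exists_partial_spread (F : Type*) [Field F] [Fintype F] (q r u z : ℕ)
    (hq : Fintype.card F = q) (hr : 1 ≤ r) (hu : r < u) (hz : z = u % r) :
    ∃ S : Finset (Submodule F (Fin u → F)),
      (∀ W ∈ S, Module.finrank F W = r) ∧
      (∀ W ∈ S, ∀ W' ∈ S, W ≠ W' → W ⊓ W' = ⊥) ∧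
      q ^ u - q ^ r * (q ^ z - 1) - 1 ≤ S.card * (q ^ r - 1) := by
  obtain ⟨S, hS, hcard⟩ := exists_isPartialSpread_fin F (by omega) u hu.le
  refine ⟨S, hS.1, hS.2, ?_⟩
  rw [hq, ← hz] at hcard
  have hq0 : 0 < q := hq ▸ Fintype.card_pos
  have hrz : q ^ r ≤ q ^ (r + z) := Nat.pow_le_pow_right hq0 (Nat.le_add_right r z)
  rw [Nat.mul_sub, mul_one, ← pow_add]
  omega
end
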